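/- arXiv:1907.02834 — 2 statements merged into one kernel-verified Lean document; each statement's English description precedes it below -/
import Mathlib

section
/- The n-th order suffix abstraction forms an idempotent semiring: the structure (2^{W(n)}, ∪, ⊙, ∅, {ε}), where U ⊙ V = { suff_n(uv) | u ∈ U, v ∈ V }, satisfies all idempotent-semiring axioms. -/
/-- Words of length at most `n`. -/
def Wn (Act : Type*) (n : ℕ) : Set (List Act) := { w | w.length ≤ n }

/-- `suff n w` is the suffix of `w` of length `min n |w|`. -/
def suff {Act : Type*} (n : ℕ) (w : List Act) : List Act := w.drop (w.length - n)

/-- Product of the `n`-th order suffix abstraction. -/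
def smul {Act : Type*} (n : ℕ) (U V : Set (List Act)) : Set (List Act) :=
  { w | ∃ u ∈ U, ∃ v ∈ V, w = suff n (u ++ v) }

/-!
`suff n w` is `w.rtake n`, the reversal of the length-`n` prefix of the reversed word, so both
absorption laws `suff n (suff n u ++ v) = suff n (u ++ v) = suff n (u ++ suff n v)` reduce to the
corresponding facts about `List.take`. Hence `(u, v) ↦ suff n (u ++ v)` is associative, and `⊙` is
its pointwise lift `Set.image2`, which inherits associativity and distributes over `∪`.
-/

namespace List

variable {α : Type*}

theorem take_take_append (n : ℕ) (a b : List α) : take n (take n a ++ b) = take n (a ++ b) := by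
  simp only [take_append, take_take, length_take]
  grind

theorem take_append_take (n : ℕ) (a b : List α) : take n (a ++ take n b) = take n (a ++ b) := by
  simp only [take_append, take_take]
  grind

end List

namespace SuffixAbstraction

variable {Act : Type*} {n : ℕ}

theorem suff_eq_reverse_take_reverse (w : List Act) :
    suff n w = (w.reverse.take n).reverse :=
  List.rtake_eq_reverse_take_reverse w n

theorem suff_of_length_le {w : List Act} (h : w.length ≤ n) : suff n w = w := by
  simp [suff, Nat.sub_eq_zero_of_le h]

theorem suff_suff_append (u v : List Act) : suff n (suff n u ++ v) = suff n (u ++ v) := by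
  simp only [suff_eq_reverse_take_reverse, List.reverse_append, List.reverse_reverse,
    List.take_append_take]

theorem suff_append_suff (u v : List Act) : suff n (u ++ suff n v) = suff n (u ++ v) := by
  simp only [suff_eq_reverse_take_reverse, List.reverse_append, List.reverse_reverse,
    List.take_take_append]

theorem smul_eq_image2 (U V : Set (List Act)) :
    smul n U V = Set.image2 (fun u v => suff n (u ++ v)) U V := by
  ext w
  simp only [smul, Set.mem_image2, Set.mem_ofPred_eq, eq_comm]

theorem smul_assoc (U V Z : Set (List Act)) :
    smul n (smul n U V) Z = smul n U (smul n V Z) := by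
  simp only [smul_eq_image2]
  refine Set.image2_assoc fun u v z => ?_
  rw [suff_suff_append, suff_append_suff, List.append_assoc]

theorem smul_singleton_nil {U : Set (List Act)} (hU : U ⊆ Wn Act n) :
    smul n U {[]} = U := by
  rw [smul_eq_image2, Set.image2_singleton_right]
  exact Set.EqOn.image_eq_self fun u hu => by simpa using suff_of_length_le (hU hu)

theorem singleton_nil_smul {U : Set (List Act)} (hU : U ⊆ Wn Act n) :
    smul n {[]} U = U := by
  rw [smul_eq_image2, Set.image2_singleton_left]
  exact Set.EqOn.image_eq_self fun u hu => by simpa using suff_of_length_le (hU hu)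

theorem smul_empty (U : Set (List Act)) : smul n U ∅ = ∅ := by
  rw [smul_eq_image2, Set.image2_empty_right]

theorem empty_smul (U : Set (List Act)) : smul n ∅ U = ∅ := by
  rw [smul_eq_image2, Set.image2_empty_left]

theorem smul_union (U V Z : Set (List Act)) : smul n U (V ∪ Z) = smul n U V ∪ smul n U Z := by
  simp only [smul_eq_image2, Set.image2_union_right]

theorem union_smul (U V Z : Set (List Act)) : smul n (U ∪ V) Z = smul n U Z ∪ smul n V Z := by
  simp only [smul_eq_image2, Set.image2_union_left]

end SuffixAbstraction

theorem suffix_abstraction_idem_semiring {Act : Type*} (n : ℕ) :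
    -- union is associative, commutative, idempotent with neutral element ∅
    (∀ U V Z : Set (List Act), (U ∪ V) ∪ Z = U ∪ (V ∪ Z)) ∧
    (∀ U V : Set (List Act), U ∪ V = V ∪ U) ∧
    (∀ U : Set (List Act), U ∪ U = U) ∧
    (∀ U : Set (List Act), U ∪ ∅ = U) ∧
    -- ⊙ is associative, with unit {ε} and annihilator ∅ on subsets of W(n)
    (∀ U V Z : Set (List Act), U ⊆ Wn Act n → V ⊆ Wn Act n → Z ⊆ Wn Act n →
      smul n (smul n U V) Z = smul n U (smul n V Z)) ∧
    (∀ U : Set (List Act), U ⊆ Wn Act n → smul n U {([] : List Act)} = U) ∧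
    (∀ U : Set (List Act), U ⊆ Wn Act n → smul n {([] : List Act)} U = U) ∧
    (∀ U : Set (List Act), smul n U ∅ = ∅) ∧
    (∀ U : Set (List Act), smul n ∅ U = ∅) ∧
    -- ⊙ distributes over ∪
    (∀ U V Z : Set (List Act), smul n U (V ∪ Z) = smul n U V ∪ smul n U Z) ∧
    (∀ U V Z : Set (List Act), smul n (U ∪ V) Z = smul n U Z ∪ smul n V Z) := by
  exact ⟨Set.union_assoc, Set.union_comm, Set.union_self, Set.union_empty,
    fun U V Z _ _ _ => SuffixAbstraction.smul_assoc U V Z,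
    fun _ => SuffixAbstraction.smul_singleton_nil, fun _ => SuffixAbstraction.singleton_nil_smul,
    SuffixAbstraction.smul_empty, SuffixAbstraction.empty_smul, SuffixAbstraction.smul_union,
    SuffixAbstraction.union_smul⟩
end

section
/- In the prefix abstraction of order l, prepending stabilizes shuffles of long words: for any words x = x₁…x_l of length exactly l (viewed as a sequence), any word w, and any letter x₀, pref_l(x₀ · s) ranges over the same set whether s ranges over x₁…x_l ⧢ w or over x₁…x_{l-1} ⧢ w; i.e., {pref_l(x₀·s) | s ∈ (x₁…x_l) ⧢ w} = {pref_l(x₀·s) | s ∈ (x₁…x_{l−1}) ⧢ w}. -/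
/-
Only the first `k` letters of a shuffle `s ∈ u ⧢ w` are observed, and each of them is produced
from `w` or from the first `k` letters of `u` (a synchronization consumes one of each). Hence
`take k '' (u ⧢ w)` depends on `u` only through `u.take k`, by induction on `k`. For `x` of length
`l`, prepending `x₀` and truncating to `l` observes `l - 1` letters of the shuffle, and `x` and
`x.dropLast` agree on their first `l - 1` letters.
-/

/-- Shuffle with synchronization: complementary heads may synchronize into `τ`. -/
def sh {Act : Type*} [DecidableEq Act] (τ : Act) (bar : Act → Act) :
    List Act → List Act → Set (List Act)
  | [], w' => {w'}
  | w, [] => {w}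
  | a :: u, b :: v =>
    (fun s => a :: s) '' sh τ bar u (b :: v) ∪
    (fun s => b :: s) '' sh τ bar (a :: u) v ∪
    (if b = bar a then (fun s => τ :: s) '' sh τ bar u v else ∅)

theorem List.take_succ_image_cons {α : Type*} (k : ℕ) (a : α) (S : Set (List α)) :
    List.take (k + 1) '' ((fun s => a :: s) '' S) = (fun s => a :: s) '' (List.take k '' S) := by
  simp only [Set.image_image, List.take_succ_cons]

namespace sh

variable {Act : Type*} [DecidableEq Act] (τ : Act) (bar : Act → Act)

theorem nil_left (w : List Act) : sh τ bar [] w = {w} := by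
  simp [sh]

theorem nil_right (u : List Act) : sh τ bar u [] = {u} := by
  cases u <;> simp [sh]

theorem cons_cons (a b : Act) (u v : List Act) :
    sh τ bar (a :: u) (b :: v) =
      (fun s => a :: s) '' sh τ bar u (b :: v) ∪
      (fun s => b :: s) '' sh τ bar (a :: u) v ∪
      (if b = bar a then (fun s => τ :: s) '' sh τ bar u v else ∅) := by
  rw [sh]

theorem nonempty : ∀ u w : List Act, (sh τ bar u w).Nonempty
  | [], w => ⟨w, by rw [nil_left]; rfl⟩
  | a :: u, [] => ⟨a :: u, by rw [nil_right]; rfl⟩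
  | a :: u, b :: w => by
    obtain ⟨s, hs⟩ := nonempty u (b :: w)
    exact ⟨a :: s, by rw [cons_cons]; exact Or.inl (Or.inl ⟨s, hs, rfl⟩)⟩

theorem take_image_congr :
    ∀ (k : ℕ) {u v : List Act}, u.take k = v.take k →
      ∀ w, List.take k '' sh τ bar u w = List.take k '' sh τ bar v w
  | 0, u, v, _, w => by
    have htake_zero : (List.take 0 : List Act → List Act) = fun _ => [] := rfl
    rw [htake_zero, (nonempty τ bar u w).image_const, (nonempty τ bar v w).image_const]
  | k + 1, [], v, h, w => by
    obtain rfl : v = [] := by simpa [eq_comm (a := []), List.take_eq_nil_iff] using h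
    rfl
  | k + 1, a :: u, [], h, w => by simp at h
  | k + 1, a :: u, b :: v, h, [] => by
    simp only [nil_right, Set.image_singleton, h]
  | k + 1, a :: u, b :: v, h, c :: w => by
    obtain ⟨rfl, hk⟩ : a = b ∧ u.take k = v.take k := by simpa [List.take_succ_cons] using h
    have hk' : (a :: u).take k = (a :: v).take k := by
      have h' := congrArg (List.take k) h
      rwa [List.take_take, List.take_take, min_eq_left (Nat.le_succ k)] at h'
    simp only [cons_cons, Set.image_union, List.take_succ_image_cons]
    rw [take_image_congr k hk, take_image_congr k hk']
    split_ifs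
    · rw [List.take_succ_image_cons, List.take_succ_image_cons, take_image_congr k hk]
    · rfl

end sh

theorem prefix_shuffle_dropLast_general {Act : Type*} [DecidableEq Act] (τ : Act) (bar : Act → Act)
    (l : ℕ) (x : List Act) (hx : x.length = l)
    (w : List Act) (x₀ : Act) :
    (fun s => (x₀ :: s).take l) '' sh τ bar x w
      = (fun s => (x₀ :: s).take l) '' sh τ bar x.dropLast w := by
  subst hx
  cases hl : x.length with
  | zero => rw [List.length_eq_zero_iff.mp hl]; rfl
  | succ k =>
    have hprefix : x.take k = x.dropLast.take k := by
      rw [List.dropLast_eq_take, hl, Nat.add_sub_cancel, List.take_take, min_self]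
    have hobs : (fun s : List Act => (x₀ :: s).take (k + 1)) = (x₀ :: ·) ∘ List.take k := by
      funext s
      exact List.take_succ_cons
    rw [hobs, Set.image_comp, Set.image_comp, sh.take_image_congr τ bar k hprefix]

theorem prefix_shuffle_dropLast {Act : Type*} [DecidableEq Act] (τ : Act) (bar : Act → Act)
    (hinv : ∀ a, bar (bar a) = a) (l : ℕ) (x : List Act) (hx : x.length = l)
    (w : List Act) (x₀ : Act) :
    (fun s => (x₀ :: s).take l) '' sh τ bar x w
      = (fun s => (x₀ :: s).take l) '' sh τ bar x.dropLast w :=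
  prefix_shuffle_dropLast_general τ bar l x hx w x₀
end
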